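/- Given the soft-thresholding operator S_λ(q) = max(0, 1 - λ/|q|)·q for q ≠ 0 and S_λ(0) = 0 (λ > 0), S_λ(q) is the unique minimizer over p ∈ ℍ of λ|p| + (1/2)|p - q|². -/

import Mathlib

open Quaternion Classical

open scoped RealInnerProductSpace

/-!
The objective `p ↦ l‖p‖ + ½‖p - q‖²` is strictly convex, and `s` is its unique minimizer as soon
as `q - s` is a subgradient of `l‖·‖` at `s`, i.e. `‖q - s‖ ≤ l` and `⟪q - s, s⟫ = l‖s‖`.
Soft-thresholding leaves the residual `q - S_l(q) = min 1 (l/‖q‖) • q`, which has exactly these two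
properties.
-/

section InnerProductSpace

variable {E : Type*} [NormedAddCommGroup E] [InnerProductSpace ℝ E]

noncomputable def proxObjective (l : ℝ) (q p : E) : ℝ := l * ‖p‖ + 1 / 2 * ‖p - q‖ ^ 2

theorem proxObjective_lt_of_isSubgradient {l : ℝ} {q s p : E} (hnorm : ‖q - s‖ ≤ l)
    (hinner : ⟪q - s, s⟫ = l * ‖s‖) (hp : p ≠ s) :
    proxObjective l q s < proxObjective l q p := by
  have hsub : ⟪q - s, p⟫ ≤ l * ‖p‖ :=
    (real_inner_le_norm _ _).trans (mul_le_mul_of_nonneg_right hnorm (norm_nonneg p))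
  have hexpand : ‖p - q‖ ^ 2 = ‖p - s‖ ^ 2 - 2 * ⟪p - s, q - s⟫ + ‖q - s‖ ^ 2 := by
    rw [← norm_sub_sq_real, sub_sub_sub_cancel_right]
  have hps : 0 < ‖p - s‖ ^ 2 := by
    have := sub_ne_zero.mpr hp
    positivity
  rw [real_inner_comm, inner_sub_right, hinner] at hexpand
  rw [proxObjective, proxObjective, norm_sub_rev s q]
  nlinarith

-- For `q = 0` the junk value `l / 0 = 0` still gives `softThreshold l 0 = 0`.
noncomputable def softThreshold (l : ℝ) (q : E) : E := max 0 (1 - l / ‖q‖) • q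

theorem sub_softThreshold (l : ℝ) (q : E) : q - softThreshold l q = min 1 (l / ‖q‖) • q := by
  rw [softThreshold, ← one_smul ℝ q, smul_smul, mul_one, ← sub_smul, one_smul, ← min_sub_sub_left,
    sub_zero, sub_sub_cancel]

theorem norm_sub_softThreshold_le {l : ℝ} (hl : 0 ≤ l) (q : E) : ‖q - softThreshold l q‖ ≤ l := by
  rw [sub_softThreshold, norm_smul, Real.norm_of_nonneg (by positivity)]
  rcases eq_or_ne q 0 with rfl | hq
  · simpa
  · calc min 1 (l / ‖q‖) * ‖q‖ ≤ l / ‖q‖ * ‖q‖ := by gcongr; exact min_le_right _ _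
      _ = l := div_mul_cancel₀ l (norm_ne_zero_iff.mpr hq)

theorem inner_sub_softThreshold_self (l : ℝ) (q : E) :
    ⟪q - softThreshold l q, softThreshold l q⟫ = l * ‖softThreshold l q‖ := by
  rw [sub_softThreshold, softThreshold, real_inner_smul_left, real_inner_smul_right,
    real_inner_self_eq_norm_sq, norm_smul, Real.norm_of_nonneg (le_max_left _ _)]
  rcases eq_or_ne q 0 with rfl | hq
  · simp
  have hq' : ‖q‖ ≠ 0 := norm_ne_zero_iff.mpr hq
  rcases le_total (l / ‖q‖) 1 with h | h
  · rw [min_eq_right h]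
    field_simp
  · rw [max_eq_left (sub_nonpos.mpr h)]
    simp

theorem proxObjective_softThreshold_lt {l : ℝ} (hl : 0 ≤ l) (q : E) {p : E}
    (hp : p ≠ softThreshold l q) :
    proxObjective l q (softThreshold l q) < proxObjective l q p :=
  proxObjective_lt_of_isSubgradient (norm_sub_softThreshold_le hl q)
    (inner_sub_softThreshold_self l q) hp

end InnerProductSpace

theorem stmt_19 (l : ℝ) (hl : 0 < l) (q : ℍ[ℝ])
    (s : ℍ[ℝ]) (hs : s = if q = 0 then 0 else (max 0 (1 - l / ‖q‖)) • q) :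
    ∀ p : ℍ[ℝ], p ≠ s →
      l * ‖s‖ + (1 / 2) * ‖s - q‖ ^ 2 < l * ‖p‖ + (1 / 2) * ‖p - q‖ ^ 2 := by
  intro p hp
  have hs' : s = softThreshold l q := by
    rw [hs, softThreshold]
    split_ifs with hq <;> simp [hq]
  subst hs'
  exact proxObjective_softThreshold_lt hl.le q hp
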